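/- Let s > 0 and let S be a nonempty finite set of points of the square lattice L_s = {(s·(p + 1/2), s·(q + 1/2)) : p, q ∈ ℤ} ⊆ ℝ². Then there exist x, y ∈ S with Euclidean distance dist(x, y) ≥ s·(√|S| − 1). -/

import Mathlib

/-!
Rescale by `s`: the coordinates of a lattice point are half-integers, so a set of lattice points
whose pairwise distances are at most `D` projects, on each axis, onto at most `D / s + 1` values.
A point is determined by its two projections, hence `|S| ≤ (D / s + 1)²` with `D` the largest
distance realised in `S`.
-/

open MeasureTheory Metric Set ENNReal

noncomputable section

/-- The plane `ℝ²` with the Euclidean metric. -/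
abbrev Plane := EuclideanSpace ℝ (Fin 2)

/-- The square lattice of spacing `s`, offset by half a spacing in each coordinate:
`L_s = {(s(p + 1/2), s(q + 1/2)) : p, q ∈ ℤ}`. -/
def latticePts (s : ℝ) : Set Plane :=
  {x | ∃ p q : ℤ, x 0 = s * ((p : ℝ) + 1 / 2) ∧ x 1 = s * ((q : ℝ) + 1 / 2)}

open Finset

theorem Int.card_le_of_forall_sub_le {A : Finset ℤ} (hA : A.Nonempty) {d : ℝ}
    (h : ∀ a ∈ A, ∀ b ∈ A, ((a - b : ℤ) : ℝ) ≤ d) : (#A : ℝ) ≤ d + 1 := by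
  set m := A.min' hA
  have hd : 0 ≤ ⌊d⌋ := Int.floor_nonneg.2 (by simpa using h m (A.min'_mem hA) m (A.min'_mem hA))
  have hsub : A ⊆ Icc m (m + ⌊d⌋) := fun a ha =>
    mem_Icc.2 ⟨A.min'_le a ha, by linarith [Int.le_floor.2 (h a ha m (A.min'_mem hA))]⟩
  calc (#A : ℝ) ≤ #(Icc m (m + ⌊d⌋)) := by exact_mod_cast Finset.card_le_card hsub
    _ = ⌊d⌋ + 1 := by
      rw [Int.card_Icc, show m + ⌊d⌋ + 1 - m = ⌊d⌋ + 1 by ring]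
      exact_mod_cast Int.toNat_of_nonneg (by omega)
    _ ≤ d + 1 := by linarith [Int.floor_le d]

theorem card_le_div_add_one_of_forall_sub_le {s c d : ℝ} (hs : 0 < s) {A : Finset ℝ}
    (hA : A.Nonempty) (hlat : ∀ t ∈ A, ∃ p : ℤ, t = s * (p + c))
    (h : ∀ t ∈ A, ∀ u ∈ A, t - u ≤ d) : (#A : ℝ) ≤ d / s + 1 := by
  set f : ℝ → ℤ := fun t => ⌊t / s - c⌋
  have hf : ∀ t ∈ A, t = s * (f t + c) := by
    intro t ht
    obtain ⟨p, rfl⟩ := hlat t ht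
    simp [f, hs.ne']
  have hinj : Set.InjOn f A := fun t ht u hu htu => by rw [hf t ht, hf u hu, htu]
  rw [← card_image_of_injOn hinj]
  refine Int.card_le_of_forall_sub_le (hA.image f) ?_
  rintro _ ha _ hb
  obtain ⟨t, ht, rfl⟩ := mem_image.1 ha
  obtain ⟨u, hu, rfl⟩ := mem_image.1 hb
  rw [le_div_iff₀ hs]
  have hdiff := h t ht u hu
  rw [hf t ht, hf u hu] at hdiff
  push_cast
  linarith

theorem EuclideanSpace.card_le_pow_of_forall_dist_le {ι : Type*} [Fintype ι] {s c D : ℝ}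
    (hs : 0 < s) {S : Finset (EuclideanSpace ℝ ι)} (hS : S.Nonempty)
    (hlat : ∀ x ∈ S, ∀ i, ∃ p : ℤ, x i = s * (p + c))
    (hD : ∀ x ∈ S, ∀ y ∈ S, dist x y ≤ D) : (#S : ℝ) ≤ (D / s + 1) ^ Fintype.card ι := by
  classical
  set coords : ι → Finset ℝ := fun i => S.image (· i)
  have hcoord : ∀ i, (#(coords i) : ℝ) ≤ D / s + 1 := by
    intro i
    refine card_le_div_add_one_of_forall_sub_le (c := c) hs (hS.image _) ?_ ?_
    · simpa [coords] using fun x hx => hlat x hx i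
    · rintro _ hxi _ hyi
      obtain ⟨x, hx, rfl⟩ := mem_image.1 hxi
      obtain ⟨y, hy, rfl⟩ := mem_image.1 hyi
      calc x i - y i ≤ dist (x i) (y i) := by rw [Real.dist_eq]; exact le_abs_self _
        _ ≤ dist x y := PiLp.dist_apply_le x y i
        _ ≤ D := hD x hx y hy
  have hinj : #S ≤ #(Fintype.piFinset coords) :=
    card_le_card_of_injOn WithLp.ofLp
      (fun x hx => Fintype.mem_piFinset.2 fun i => mem_image_of_mem _ hx)
      (WithLp.ofLp_injective _).injOn
  calc (#S : ℝ) ≤ ∏ i, (#(coords i) : ℝ) := by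
        rw [Fintype.card_piFinset] at hinj; exact_mod_cast hinj
    _ ≤ ∏ _i : ι, (D / s + 1) := prod_le_prod (fun _ _ => by positivity) fun i _ => hcoord i
    _ = (D / s + 1) ^ Fintype.card ι := by rw [prod_const, card_univ]

theorem exists_int_of_mem_latticePts {s : ℝ} {x : Plane} (hx : x ∈ latticePts s) (i : Fin 2) :
    ∃ p : ℤ, x i = s * (p + 1 / 2) := by
  obtain ⟨p, q, hp, hq⟩ := hx
  fin_cases i
  exacts [⟨p, hp⟩, ⟨q, hq⟩]

/-- **Lattice diameter estimate.** A nonempty finite set `S` of points of the square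
lattice of spacing `s > 0` contains two points at Euclidean distance at least
`s·(√|S| - 1)`. -/
theorem lattice_diameter (s : ℝ) (hs : 0 < s) (S : Set Plane) (hfin : S.Finite)
    (hne : S.Nonempty) (hsub : S ⊆ latticePts s) :
    ∃ x ∈ S, ∃ y ∈ S, s * (Real.sqrt (S.ncard : ℝ) - 1) ≤ dist x y := by
  set T := hfin.toFinset
  have hT : T.Nonempty := hfin.toFinset_nonempty.2 hne
  obtain ⟨⟨x, y⟩, hxy, hmax⟩ :=
    (T ×ˢ T).exists_max_image (fun p => dist p.1 p.2) (hT.product hT)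
  rw [mem_product, hfin.mem_toFinset, hfin.mem_toFinset] at hxy
  refine ⟨x, hxy.1, y, hxy.2, ?_⟩
  have hcard : (S.ncard : ℝ) ≤ (dist x y / s + 1) ^ 2 := by
    rw [ncard_eq_toFinset_card S hfin]
    exact EuclideanSpace.card_le_pow_of_forall_dist_le hs hT
      (fun z hz => exists_int_of_mem_latticePts (hsub (hfin.mem_toFinset.1 hz)))
      (fun z hz w hw => hmax (z, w) (mem_product.2 ⟨hz, hw⟩))
  have hsqrt : Real.sqrt S.ncard ≤ dist x y / s + 1 :=
    Real.sqrt_le_iff.2 ⟨by positivity, hcard⟩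
  calc s * (Real.sqrt S.ncard - 1) ≤ s * (dist x y / s) := by gcongr; linarith
    _ = dist x y := mul_div_cancel₀ _ hs.ne'
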